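/- arXiv:1501.04665 — 8 statements merged into one kernel-verified Lean document; each statement's English description precedes it below -/
import Mathlib

section
/- Let S be a finite set, and let C be a random variable taking values in S. Let E1 and E2 be events such that (i) E1 and E2 are conditionally independent given {C=x} for each x in S; (ii) for all x,y in S, if Pr(E1|C=x) > Pr(E1|C=y) then Pr(E2|C=x) > Pr(E2|C=y); and (iii) there exist x,y in S with Pr(C=x)>0, Pr(C=y)>0 and Pr(E1|C=x) ≠ Pr(E1|C=y). Then Pr(E1 ∩ E2) > Pr(E1)·Pr(E2). -/
open MeasureTheory

theorem stmt_0 {Ω : Type*} [MeasurableSpace Ω] (μ : Measure Ω) [IsProbabilityMeasure μ]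
    {S : Type*} [Fintype S] [MeasurableSpace S] [MeasurableSingletonClass S]
    (C : Ω → S) (hC : Measurable C) (E1 E2 : Set Ω)
    (hE1 : MeasurableSet E1) (hE2 : MeasurableSet E2)
    -- cp x E = Pr(E | C = x), defined when Pr(C = x) > 0
    (cp : S → Set Ω → ℝ)
    (hcp : ∀ x E, 0 < μ (C ⁻¹' {x}) →
      cp x E = (μ (E ∩ C ⁻¹' {x})).toReal / (μ (C ⁻¹' {x})).toReal)
    -- (i) conditional independence given each value of C
    (hindep : ∀ x, 0 < μ (C ⁻¹' {x}) → cp x (E1 ∩ E2) = cp x E1 * cp x E2)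
    -- (ii) monotone coupling of conditional probabilities
    (hmono : ∀ x y, 0 < μ (C ⁻¹' {x}) → 0 < μ (C ⁻¹' {y}) →
      cp y E1 < cp x E1 → cp y E2 < cp x E2)
    -- (iii) some genuine dependence on C
    (hdep : ∃ x y, 0 < μ (C ⁻¹' {x}) ∧ 0 < μ (C ⁻¹' {y}) ∧ cp x E1 ≠ cp y E1) :
    (μ E1).toReal * (μ E2).toReal < (μ (E1 ∩ E2)).toReal := by
  classical
  set p : S → ℝ := fun x => (μ (C ⁻¹' {x})).toReal with hpdef
  set a : S → ℝ := fun x => cp x E1 with hadef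
  set b : S → ℝ := fun x => cp x E2 with hbdef
  have hmeas : ∀ x : S, MeasurableSet (C ⁻¹' {x}) := fun x => hC (measurableSet_singleton x)
  have hfin : ∀ s : Set Ω, μ s ≠ ⊤ := fun s => measure_ne_top μ s
  have hpos : ∀ x : S, 0 < μ (C ⁻¹' {x}) → 0 < p x := by
    intro x h
    exact ENNReal.toReal_pos (ne_of_gt h) (hfin _)
  have hzero : ∀ x : S, ¬ 0 < μ (C ⁻¹' {x}) → p x = 0 := by
    intro x h
    have : μ (C ⁻¹' {x}) = 0 := by simpa [pos_iff_ne_zero] using h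
    simp [hpdef, this]
  have hpnn : ∀ x : S, 0 ≤ p x := fun x => ENNReal.toReal_nonneg
  -- decomposition of any measurable set over the fibers of C
  have hsum : ∀ E : Set Ω, MeasurableSet E →
      (μ E).toReal = ∑ x : S, (μ (E ∩ C ⁻¹' {x})).toReal := by
    intro E hE
    have hU : (⋃ x : S, E ∩ C ⁻¹' {x}) = E := by
      ext ω; simp
    have hdisj : Pairwise (Function.onFun Disjoint fun x : S => E ∩ C ⁻¹' {x}) := by
      intro x y hxy
      refine Set.disjoint_left.2 ?_
      rintro ω ⟨_, hx⟩ ⟨_, hy⟩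
      simp only [Set.mem_preimage, Set.mem_singleton_iff] at hx hy
      exact hxy (hx.symm.trans hy)
    calc (μ E).toReal = (μ (⋃ x : S, E ∩ C ⁻¹' {x})).toReal := by rw [hU]
      _ = (∑' x : S, μ (E ∩ C ⁻¹' {x})).toReal := by
            rw [measure_iUnion hdisj fun x => hE.inter (hmeas x)]
      _ = (∑ x : S, μ (E ∩ C ⁻¹' {x})).toReal := by rw [tsum_fintype]
      _ = ∑ x : S, (μ (E ∩ C ⁻¹' {x})).toReal := ENNReal.toReal_sum fun x _ => hfin _
  have hq : ∀ (E : Set Ω) (x : S), (μ (E ∩ C ⁻¹' {x})).toReal = p x * cp x E := by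
    intro E x
    by_cases h : 0 < μ (C ⁻¹' {x})
    · rw [hcp x E h]
      have hp0 : p x ≠ 0 := ne_of_gt (hpos x h)
      rw [mul_comm, div_mul_cancel₀ _ hp0]
    · have h0 : μ (C ⁻¹' {x}) = 0 := by simpa [pos_iff_ne_zero] using h
      have h1 : μ (E ∩ C ⁻¹' {x}) = 0 := measure_mono_null Set.inter_subset_right h0
      rw [hzero x h, h1]
      simp
  set A : ℝ := ∑ x : S, p x * a x with hAdef
  set B : ℝ := ∑ x : S, p x * b x with hBdef
  set T : ℝ := ∑ x : S, p x * (a x * b x) with hTdef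
  have hA : (μ E1).toReal = A := by
    rw [hsum E1 hE1]; exact Finset.sum_congr rfl fun x _ => hq E1 x
  have hB : (μ E2).toReal = B := by
    rw [hsum E2 hE2]; exact Finset.sum_congr rfl fun x _ => hq E2 x
  have hT : (μ (E1 ∩ E2)).toReal = T := by
    rw [hsum _ (hE1.inter hE2)]
    refine Finset.sum_congr rfl fun x _ => ?_
    rw [hq (E1 ∩ E2) x]
    by_cases h : 0 < μ (C ⁻¹' {x})
    · rw [hindep x h]
    · rw [hzero x h]; simp
  have hP : ∑ x : S, p x = 1 := by
    have h := hsum Set.univ MeasurableSet.univ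
    simpa [Set.univ_inter] using h.symm
  -- termwise nonnegativity
  have hsign : ∀ x y : S, 0 ≤ p x * p y * ((a x - a y) * (b x - b y)) := by
    intro x y
    by_cases hx : 0 < μ (C ⁻¹' {x})
    · by_cases hy : 0 < μ (C ⁻¹' {y})
      · rcases lt_trichotomy (a x) (a y) with h | h | h
        · have hb := hmono y x hy hx h
          have : 0 ≤ (a x - a y) * (b x - b y) := by nlinarith
          exact mul_nonneg (mul_nonneg (hpnn x) (hpnn y)) this
        · simp [h]
        · have hb := hmono x y hx hy h
          have : 0 ≤ (a x - a y) * (b x - b y) :=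
            mul_nonneg (by linarith) (by linarith)
          exact mul_nonneg (mul_nonneg (hpnn x) (hpnn y)) this
      · rw [hzero y hy]; simp
    · rw [hzero x hx]; simp
  -- strict positivity of the double sum
  have htotal : 0 < ∑ x : S, ∑ y : S, p x * p y * ((a x - a y) * (b x - b y)) := by
    obtain ⟨x₀, y₀, hx₀, hy₀, hne⟩ := hdep
    have key : ∀ x y : S, 0 < μ (C ⁻¹' {x}) → 0 < μ (C ⁻¹' {y}) → a y < a x →
        0 < p x * p y * ((a x - a y) * (b x - b y)) := by
      intro x y hx hy h
      have hb := hmono x y hx hy h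
      exact mul_pos (mul_pos (hpos x hx) (hpos y hy))
        (mul_pos (by linarith) (by linarith))
    rcases hne.lt_or_gt with h | h
    · refine Finset.sum_pos' (fun x _ => Finset.sum_nonneg fun y _ => hsign x y)
        ⟨y₀, Finset.mem_univ _, ?_⟩
      refine Finset.sum_pos' (fun y _ => hsign y₀ y) ⟨x₀, Finset.mem_univ _, ?_⟩
      exact key y₀ x₀ hy₀ hx₀ h
    · refine Finset.sum_pos' (fun x _ => Finset.sum_nonneg fun y _ => hsign x y)
        ⟨x₀, Finset.mem_univ _, ?_⟩
      refine Finset.sum_pos' (fun y _ => hsign x₀ y) ⟨y₀, Finset.mem_univ _, ?_⟩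
      exact key x₀ y₀ hx₀ hy₀ h
  -- the Chebyshev identity
  have hinner : ∀ x : S, ∑ y : S, p x * p y * ((a x - a y) * (b x - b y)) =
      p x * (a x * b x) * (∑ y : S, p y) - (p x * a x) * B - (p x * b x) * A + p x * T := by
    intro x
    rw [hBdef, hAdef, hTdef, Finset.mul_sum, Finset.mul_sum, Finset.mul_sum, Finset.mul_sum,
      ← Finset.sum_sub_distrib, ← Finset.sum_sub_distrib, ← Finset.sum_add_distrib]
    exact Finset.sum_congr rfl fun y _ => by ring
  have hid : ∑ x : S, ∑ y : S, p x * p y * ((a x - a y) * (b x - b y)) = 2 * (T - A * B) := by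
    calc ∑ x : S, ∑ y : S, p x * p y * ((a x - a y) * (b x - b y))
        = ∑ x : S, (p x * (a x * b x) * 1 - (p x * a x) * B - (p x * b x) * A + p x * T) := by
          refine Finset.sum_congr rfl fun x _ => ?_
          rw [hinner x, hP]
      _ = (∑ x : S, p x * (a x * b x)) * 1 - (∑ x : S, p x * a x) * B
            - (∑ x : S, p x * b x) * A + (∑ x : S, p x) * T := by
          rw [Finset.sum_add_distrib, Finset.sum_sub_distrib, Finset.sum_sub_distrib,
            ← Finset.sum_mul, ← Finset.sum_mul, ← Finset.sum_mul, ← Finset.sum_mul]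
      _ = 2 * (T - A * B) := by
          rw [hP, ← hAdef, ← hBdef, ← hTdef]; ring
  rw [hA, hB, hT]
  rw [hid] at htotal
  linarith
end

section
/- Let S be a finite set, C a random variable in S, and E1, E2 events conditionally independent given each value of C, with Pr(Ei|C=x) defined for x with Pr(C=x)>0. Then 2[Pr(E1 ∩ E2) − Pr(E1)Pr(E2)] = Σ_{x,y∈S} Δ1(x,y)·Δ2(x,y)·Pr(C=x)·Pr(C=y), where Δi(x,y) = Pr(Ei|C=x) − Pr(Ei|C=y). -/
open MeasureTheory

/-! By the law of total probability over the fibres of `C`, `Pr(E)` is the `Pr(C = x)`-weighted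
sum of `Pr(E | C = x)`, and conditional independence makes `Pr(E1 ∩ E2)` the weighted sum of the
products `Pr(E1 | C = x) Pr(E2 | C = x)`. The claim is then the identity expressing twice the
covariance of two functions under a probability vector as a double sum over pairs. -/

theorem two_mul_sum_mul_sub_eq_sum_sum {ι R : Type*} [Fintype ι] [CommRing R]
    (a b p : ι → R) (hp : ∑ x, p x = 1) :
    2 * (∑ x, a x * b x * p x - (∑ x, a x * p x) * (∑ x, b x * p x))
      = ∑ x, ∑ y, (a x - a y) * (b x - b y) * p x * p y := by
  have expand : ∀ x y, (a x - a y) * (b x - b y) * p x * p y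
      = a x * b x * p x * p y + a y * b y * p y * p x
        - a x * p x * (b y * p y) - b x * p x * (a y * p y) := fun x y => by ring
  simp only [expand, Finset.sum_sub_distrib, Finset.sum_add_distrib, ← Finset.mul_sum,
    ← Finset.sum_mul, hp]
  ring

section Fibres

variable {Ω S : Type*} [MeasurableSpace Ω] [MeasurableSpace S] [MeasurableSingletonClass S]
  [Fintype S] (μ : Measure Ω) [IsFiniteMeasure μ] {C : Ω → S}

theorem measure_toReal_eq_sum_inter_preimage_singleton (hC : Measurable C) (E : Set Ω) :
    (μ E).toReal = ∑ x, (μ (E ∩ C ⁻¹' {x})).toReal := by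
  have := sum_measureReal_preimage_singleton (μ := μ.restrict E) Finset.univ
    (fun y _ => hC (measurableSet_singleton y))
  simpa [measureReal_restrict_apply (hC (measurableSet_singleton _)), Set.inter_comm,
    measureReal_def] using this.symm

theorem measure_toReal_eq_sum_cond_mul (hC : Measurable C) (cp : S → Set Ω → ℝ)
    (hcp : ∀ x E, 0 < μ (C ⁻¹' {x}) →
      cp x E = (μ (E ∩ C ⁻¹' {x})).toReal / (μ (C ⁻¹' {x})).toReal) (E : Set Ω) :
    (μ E).toReal = ∑ x, cp x E * (μ (C ⁻¹' {x})).toReal := by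
  rw [measure_toReal_eq_sum_inter_preimage_singleton μ hC]
  refine Finset.sum_congr rfl fun x _ => ?_
  rcases eq_zero_or_pos (μ (C ⁻¹' {x})) with h0 | hpos
  · rw [measure_mono_null Set.inter_subset_right h0, h0]
    simp
  · rw [hcp x E hpos, div_mul_cancel₀]
    exact (ENNReal.toReal_pos hpos.ne' (measure_ne_top μ _)).ne'

end Fibres

theorem stmt_1_general {Ω : Type*} [MeasurableSpace Ω] (μ : Measure Ω) [IsProbabilityMeasure μ]
    {S : Type*} [Fintype S] [MeasurableSpace S] [MeasurableSingletonClass S]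
    (C : Ω → S) (hC : Measurable C) (E1 E2 : Set Ω)
    -- cp x E = Pr(E | C = x); convention: cp x E = 0 when Pr(C = x) = 0
    (cp : S → Set Ω → ℝ)
    (hcp : ∀ x E, 0 < μ (C ⁻¹' {x}) →
      cp x E = (μ (E ∩ C ⁻¹' {x})).toReal / (μ (C ⁻¹' {x})).toReal)
    -- conditional independence given each value of C
    (hindep : ∀ x, 0 < μ (C ⁻¹' {x}) → cp x (E1 ∩ E2) = cp x E1 * cp x E2) :
    2 * ((μ (E1 ∩ E2)).toReal - (μ E1).toReal * (μ E2).toReal)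
      = ∑ x : S, ∑ y : S,
          (cp x E1 - cp y E1) * (cp x E2 - cp y E2)
            * (μ (C ⁻¹' {x})).toReal * (μ (C ⁻¹' {y})).toReal := by
  have law := measure_toReal_eq_sum_cond_mul μ hC cp hcp
  have total : ∑ x, (μ (C ⁻¹' {x})).toReal = 1 := by
    simpa using (measure_toReal_eq_sum_inter_preimage_singleton μ hC Set.univ).symm
  have inter : (μ (E1 ∩ E2)).toReal = ∑ x, cp x E1 * cp x E2 * (μ (C ⁻¹' {x})).toReal := by
    rw [law]
    refine Finset.sum_congr rfl fun x _ => ?_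
    rcases eq_zero_or_pos (μ (C ⁻¹' {x})) with h0 | hpos
    · simp [h0]
    · rw [hindep x hpos]
  rw [inter, law E1, law E2]
  exact two_mul_sum_mul_sub_eq_sum_sum _ _ _ total

theorem stmt_1 {Ω : Type*} [MeasurableSpace Ω] (μ : Measure Ω) [IsProbabilityMeasure μ]
    {S : Type*} [Fintype S] [MeasurableSpace S] [MeasurableSingletonClass S]
    (C : Ω → S) (hC : Measurable C) (E1 E2 : Set Ω)
    (hE1 : MeasurableSet E1) (hE2 : MeasurableSet E2)
    -- cp x E = Pr(E | C = x); convention: cp x E = 0 when Pr(C = x) = 0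
    (cp : S → Set Ω → ℝ)
    (hcp : ∀ x E, 0 < μ (C ⁻¹' {x}) →
      cp x E = (μ (E ∩ C ⁻¹' {x})).toReal / (μ (C ⁻¹' {x})).toReal)
    (hcp0 : ∀ x E, μ (C ⁻¹' {x}) = 0 → cp x E = 0)
    -- conditional independence given each value of C
    (hindep : ∀ x, 0 < μ (C ⁻¹' {x}) → cp x (E1 ∩ E2) = cp x E1 * cp x E2) :
    2 * ((μ (E1 ∩ E2)).toReal - (μ E1).toReal * (μ E2).toReal)
      = ∑ x : S, ∑ y : S,
          (cp x E1 - cp y E1) * (cp x E2 - cp y E2)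
            * (μ (C ⁻¹' {x})).toReal * (μ (C ⁻¹' {y})).toReal :=
  stmt_1_general μ C hC E1 E2 cp hcp hindep
end

section
/- Let s ∈ [0,1], q ∈ (0,1] with q ≠ s and q ≠ 1, let θ = e^{−rt} ∈ (0,1) for r,t > 0. Define ρ = [q(s+(1−s)θ)² + (1−q)s²(1−θ)²] / [(s+(q−s)θ)²·(1+((1/q)−1)θ²)]. Then ρ > 1 if q > s, and ρ < 1 if q < s. -/
theorem stmt_6 (s q r t : ℝ) (hs0 : 0 ≤ s) (hs1 : s ≤ 1) (hq0 : 0 < q) (hq1 : q ≤ 1)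
    (hqs : q ≠ s) (hqne1 : q ≠ 1) (hr : 0 < r) (ht : 0 < t) :
    let θ := Real.exp (-(r * t))
    let ρ := (q * (s + (1 - s) * θ)^2 + (1 - q) * s^2 * (1 - θ)^2) /
      ((s + (q - s) * θ)^2 * (1 + ((1 / q) - 1) * θ^2))
    (s < q → 1 < ρ) ∧ (q < s → ρ < 1) := by
  intro θ ρ
  have hθ0 : 0 < θ := Real.exp_pos _
  have hθ1 : θ < 1 := by
    have : -(r * t) < 0 := by nlinarith
    simpa [θ] using Real.exp_lt_one_iff.mpr this
  have hq1' : q < 1 := lt_of_le_of_ne hq1 hqne1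
  have hB : 0 < s + (q - s) * θ := by nlinarith
  have hC : 0 < 1 + ((1 / q) - 1) * θ^2 := by
    have h1 : 1 ≤ 1 / q := by
      rw [le_div_iff₀ hq0]; linarith
    nlinarith
  have hD : 0 < (s + (q - s) * θ)^2 * (1 + ((1 / q) - 1) * θ^2) :=
    mul_pos (pow_pos hB 2) hC
  have key : q * (q * (s + (1 - s) * θ)^2 + (1 - q) * s^2 * (1 - θ)^2)
      - q * ((s + (q - s) * θ)^2 * (1 + ((1 / q) - 1) * θ^2))
      = (1 - q) * θ^2 * (1 - θ) * (q - s) * (q + s + (q - s) * θ) := by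
    field_simp
    ring
  constructor
  · intro hsq
    show 1 < (q * (s + (1 - s) * θ)^2 + (1 - q) * s^2 * (1 - θ)^2) /
      ((s + (q - s) * θ)^2 * (1 + ((1 / q) - 1) * θ^2))
    rw [lt_div_iff₀ hD, one_mul]
    have pos : 0 < (1 - q) * θ^2 * (1 - θ) * (q - s) * (q + s + (q - s) * θ) :=
      mul_pos (mul_pos (mul_pos (mul_pos (sub_pos.mpr hq1') (pow_pos hθ0 2))
        (sub_pos.mpr hθ1)) (sub_pos.mpr hsq)) (by nlinarith)
    have hlt : q * ((s + (q - s) * θ)^2 * (1 + ((1 / q) - 1) * θ^2))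
        < q * (q * (s + (1 - s) * θ)^2 + (1 - q) * s^2 * (1 - θ)^2) := by linarith
    exact (mul_lt_mul_iff_right₀ hq0).mp hlt
  · intro hqs'
    show (q * (s + (1 - s) * θ)^2 + (1 - q) * s^2 * (1 - θ)^2) /
      ((s + (q - s) * θ)^2 * (1 + ((1 / q) - 1) * θ^2)) < 1
    rw [div_lt_iff₀ hD, one_mul]
    have neg : (1 - q) * θ^2 * (1 - θ) * (q - s) * (q + s + (q - s) * θ) < 0 := by
      have h1 : q - s < 0 := sub_neg.mpr hqs'
      have h2 : 0 < (1 - q) * θ^2 * (1 - θ) :=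
        mul_pos (mul_pos (sub_pos.mpr hq1') (pow_pos hθ0 2)) (sub_pos.mpr hθ1)
      have h3 : 0 < q + s + (q - s) * θ := by nlinarith
      have := mul_pos (mul_pos h2 (neg_pos.mpr h1)) h3
      nlinarith
    have hlt : q * (q * (s + (1 - s) * θ)^2 + (1 - q) * s^2 * (1 - θ)^2)
        < q * ((s + (q - s) * θ)^2 * (1 + ((1 / q) - 1) * θ^2)) := by linarith
    exact (mul_lt_mul_iff_right₀ hq0).mp hlt
end

section
/- Let p ∈ (0,1) and 0 < s < r. The equation r·e^{st} − s·e^{rt} + (r−s)·((1−p)/p) = 0 has exactly one solution t* in (0,∞). -/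
/-!
On `[0, ∞)` the function `r e^{st} - s e^{rt}` has derivative `rs (e^{st} - e^{rt}) < 0` and tends
to `-∞`, while at `t = 0` it equals `r - s`. Adding `c = (r - s)(1 - p)/p` makes the value at `0`
equal to `(r - s)/p > 0`, so by the intermediate value theorem and strict monotonicity there is
exactly one positive zero.
-/

open Real Filter Set

section
variable {s r : ℝ}

theorem hasDerivAt_mul_exp_sub_mul_exp (t : ℝ) :
    HasDerivAt (fun t => r * exp (s * t) - s * exp (r * t))
      (r * s * (exp (s * t) - exp (r * t))) t := by
  have hs_term := ((hasDerivAt_id t).const_mul s).exp.const_mul r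
  have hr_term := ((hasDerivAt_id t).const_mul r).exp.const_mul s
  exact (hs_term.sub hr_term).congr_deriv (by simp only [id, mul_one]; ring)

theorem strictAntiOn_mul_exp_sub_mul_exp (hs : 0 < s) (hsr : s < r) :
    StrictAntiOn (fun t => r * exp (s * t) - s * exp (r * t)) (Ici 0) := by
  refine strictAntiOn_of_hasDerivWithinAt_neg (convex_Ici 0)
    (fun t _ => (hasDerivAt_mul_exp_sub_mul_exp t).continuousAt.continuousWithinAt)
    (fun t _ => (hasDerivAt_mul_exp_sub_mul_exp t).hasDerivWithinAt) fun t ht => ?_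
  rw [interior_Ici] at ht
  have hexp : exp (s * t) < exp (r * t) := exp_lt_exp.mpr (mul_lt_mul_of_pos_right hsr ht)
  exact mul_neg_of_pos_of_neg (by nlinarith) (by linarith)

theorem tendsto_mul_exp_sub_mul_exp_atBot (hs : 0 < s) (hsr : s < r) :
    Tendsto (fun t => r * exp (s * t) - s * exp (r * t)) atTop atBot := by
  have hfactor : (fun t => r * exp (s * t) - s * exp (r * t)) =
      fun t => exp (s * t) * (r - s * exp ((r - s) * t)) := by
    ext t
    rw [mul_sub, ← mul_assoc, mul_comm _ s, mul_assoc, ← exp_add]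
    ring_nf
  rw [hfactor]
  refine Tendsto.atTop_mul_atBot₀ ?_ ?_
  · exact tendsto_exp_atTop.comp (tendsto_id.const_mul_atTop hs)
  · exact tendsto_atBot_add_const_left _ r <|
      (tendsto_exp_atTop.comp (tendsto_id.const_mul_atTop (sub_pos.mpr hsr)))
        |>.const_mul_atTop_of_neg (neg_neg_of_pos hs) |>.congr fun t => by simp

theorem existsUnique_pos_mul_exp_sub_mul_exp_add_eq_zero (hs : 0 < s) (hsr : s < r) {c : ℝ}
    (hc : s - r < c) : ∃! t : ℝ, 0 < t ∧ r * exp (s * t) - s * exp (r * t) + c = 0 := by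
  set f := fun t => r * exp (s * t) - s * exp (r * t) + c
  have hf0 : 0 < f 0 := by
    simp only [f, mul_zero, exp_zero, mul_one]
    linarith
  have hf_atBot : Tendsto f atTop atBot :=
    tendsto_atBot_add_const_right _ c (tendsto_mul_exp_sub_mul_exp_atBot hs hsr)
  obtain ⟨T, hT, hfT⟩ :=
    ((eventually_gt_atTop 0).and (hf_atBot.eventually_lt_atBot 0)).exists
  have hcont : ContinuousOn f (Icc 0 T) := fun t _ =>
    ((hasDerivAt_mul_exp_sub_mul_exp t).continuousAt.add continuousAt_const).continuousWithinAt
  obtain ⟨t, ⟨ht, -⟩, hft⟩ := intermediate_value_Ioc' hT.le hcont ⟨hfT.le, hf0⟩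
  refine ⟨t, ⟨ht, hft⟩, fun u ⟨hu, hfu⟩ => ?_⟩
  exact (strictAntiOn_mul_exp_sub_mul_exp hs hsr).injOn hu.le ht.le
    (add_right_cancel (hfu.trans hft.symm))
end

theorem stmt_10_general (p s r : ℝ) (hp : 0 < p) (hs : 0 < s) (hsr : s < r) :
    ∃! t : ℝ, 0 < t ∧
      r * Real.exp (s * t) - s * Real.exp (r * t) + (r - s) * ((1 - p) / p) = 0 := by
  refine existsUnique_pos_mul_exp_sub_mul_exp_add_eq_zero hs hsr ?_
  have hc_eq : (r - s) * ((1 - p) / p) = (r - s) / p - (r - s) := by field_simp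
  rw [hc_eq]
  linarith [div_pos (sub_pos.mpr hsr) hp]

theorem stmt_10 (p s r : ℝ) (hp : 0 < p) (hp1 : p < 1) (hs : 0 < s) (hsr : s < r) :
    ∃! t : ℝ, 0 < t ∧
      r * Real.exp (s * t) - s * Real.exp (r * t) + (r - s) * ((1 - p) / p) = 0 :=
  stmt_10_general p s r hp hs hsr
end

section
/- Let c > 0 and consider f(x) = (1 + c/x)/(1 + c/x²) for x > 1 (where x = e^{st}, c = (1−p)/p, and the drift rate is twice the stabilizing selection rate). The maximum of f over x > 1 is attained at x = 1 + √(1+c), and if c = k − 1 (i.e. p = 1/k) then this maximum value equals (√k + 1)/2. -/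
/-!
With `s = √(1 + c)`, clearing denominators gives `f x = (x² + c x) / (x² + c)`, and the
cross-multiplied difference `f (1 + s) - f x` has numerator `c s (x - (1 + s))²`, so `1 + s`
is a global maximiser. At `x = 1 + s` numerator and denominator factor as `s (1 + s)²` and
`2 s (1 + s)`, whence `f (1 + s) = (1 + s) / 2`.
-/

open Real

lemma one_add_div_div_one_add_div_sq (c : ℝ) {x : ℝ} (hx : x ≠ 0) :
    (1 + c / x) / (1 + c / x ^ 2) = (x ^ 2 + c * x) / (x ^ 2 + c) := by
  rw [← mul_div_mul_left _ _ (pow_ne_zero 2 hx)]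
  congr 1 <;> field_simp

section Vertex

variable {c s : ℝ}

lemma cross_mul_sub_eq_of_sq_eq (hs : s ^ 2 = 1 + c) (x : ℝ) :
    ((1 + s) ^ 2 + c * (1 + s)) * (x ^ 2 + c) - (x ^ 2 + c * x) * ((1 + s) ^ 2 + c)
      = c * s * (x - (1 + s)) ^ 2 := by
  linear_combination c * (x - 1 - s) * hs

lemma div_le_div_one_add_of_sq_eq (hc : 0 ≤ c) (hs0 : 0 ≤ s) (hs : s ^ 2 = 1 + c) {x : ℝ}
    (hx : 0 < x ^ 2 + c) :
    (x ^ 2 + c * x) / (x ^ 2 + c) ≤ ((1 + s) ^ 2 + c * (1 + s)) / ((1 + s) ^ 2 + c) := by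
  rw [div_le_div_iff₀ hx (by positivity), ← sub_nonneg, cross_mul_sub_eq_of_sq_eq hs]
  positivity

lemma div_one_add_eq_of_sq_eq (hs0 : 0 < s) (hs : s ^ 2 = 1 + c) :
    ((1 + s) ^ 2 + c * (1 + s)) / ((1 + s) ^ 2 + c) = (s + 1) / 2 := by
  have hnum : (1 + s) ^ 2 + c * (1 + s) = s * (1 + s) ^ 2 := by linear_combination -(1 + s) * hs
  have hden : (1 + s) ^ 2 + c = 2 * s * (1 + s) := by linear_combination -hs
  rw [hnum, hden, div_eq_div_iff (by positivity) two_ne_zero]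
  ring

end Vertex

theorem stmt_11 (c : ℝ) (hc : 0 < c) :
    let f := fun x : ℝ => (1 + c / x) / (1 + c / x^2)
    let x₀ := 1 + Real.sqrt (1 + c)
    (∀ x : ℝ, 1 < x → f x ≤ f x₀) ∧
    (∀ k : ℝ, c = k - 1 → f x₀ = (Real.sqrt k + 1) / 2) := by
  intro f x₀
  set s := √(1 + c)
  have hs0 : 0 < s := sqrt_pos.mpr (by linarith)
  have hs : s ^ 2 = 1 + c := sq_sqrt (by linarith)
  have hf₀ : f x₀ = ((1 + s) ^ 2 + c * (1 + s)) / ((1 + s) ^ 2 + c) :=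
    one_add_div_div_one_add_div_sq c (by positivity)
  refine ⟨fun x hx => ?_, fun k hk => ?_⟩
  · rw [hf₀]
    calc f x = (x ^ 2 + c * x) / (x ^ 2 + c) :=
          one_add_div_div_one_add_div_sq c (by positivity)
      _ ≤ _ := div_le_div_one_add_of_sq_eq hc.le hs0.le hs (by positivity)
  · rw [hf₀, div_one_add_eq_of_sq_eq hs0 hs, show s = √k from congrArg sqrt (by linarith)]
end

section
/- For all integers n ≥ 2, p ∈ (0,1), and r,t > 0: p(1 + ((1−p)/p)e^{−rt})^n + (1−p)(1−e^{−rt})^n ≥ 1 + ((1/p^{n−1}) − 1)e^{−nrt}, i.e., the star-tree likelihood ratio of CA to SA is at least the lower bound of Sober and Steel (2014a). -/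
lemma key_ineq (p A B : ℝ) (hp : 0 < p) (hp1 : p < 1) (hB : 0 ≤ B) (hAB : B ≤ A) :
    ∀ n : ℕ, 2 ≤ n →
      (p * A + (1 - p) * B) ^ n + (p - p ^ n) * (A - B) ^ n
        ≤ p * A ^ n + (1 - p) * B ^ n := by
  intro n hn
  induction n, hn using Nat.le_induction with
  | base =>
    have : p * A ^ 2 + (1 - p) * B ^ 2
        = (p * A + (1 - p) * B) ^ 2 + (p - p ^ 2) * (A - B) ^ 2 := by ring
    linarith
  | succ n hn IH =>
    set S := p * A + (1 - p) * B with hS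
    set D := A - B with hD
    have hA : 0 ≤ A := le_trans hB hAB
    have hD0 : 0 ≤ D := by simp [hD]; linarith
    have hS0 : 0 ≤ S := by
      have := mul_nonneg (le_of_lt hp) hA
      have := mul_nonneg (by linarith : (0:ℝ) ≤ 1 - p) hB
      linarith
    have hDn : 0 ≤ D ^ n := pow_nonneg hD0 n
    have hpn : p ^ n ≤ p := by
      calc p ^ n ≤ p ^ 1 := pow_le_pow_of_le_one (le_of_lt hp) (le_of_lt hp1) (by omega)
      _ = p := pow_one p
    -- identity
    have hid : p * A ^ (n + 1) + (1 - p) * B ^ (n + 1)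
        = S * (p * A ^ n + (1 - p) * B ^ n)
          + p * (1 - p) * D * (A ^ n - B ^ n) := by
      simp only [hS, hD, pow_succ]
      ring
    -- A^n - B^n ≥ D^n
    have h2 : D ^ n + B ^ n ≤ A ^ n := by
      have := pow_add_pow_le hD0 hB (show n ≠ 0 by omega)
      have hA' : D + B = A := by simp [hD]
      rwa [hA'] at this
    -- step1
    have step1 : S * (S ^ n + (p - p ^ n) * D ^ n) ≤ S * (p * A ^ n + (1 - p) * B ^ n) :=
      mul_le_mul_of_nonneg_left IH hS0
    -- step2
    have hpq : 0 ≤ p * (1 - p) * D := by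
      have : (0:ℝ) ≤ p * (1 - p) := mul_nonneg (le_of_lt hp) (by linarith)
      exact mul_nonneg this hD0
    have step2 : p * (1 - p) * D * (D ^ n) ≤ p * (1 - p) * D * (A ^ n - B ^ n) := by
      apply mul_le_mul_of_nonneg_left _ hpq
      linarith
    -- step3 : S*(p-p^n)*D^n + p*(1-p)*D*D^n ≥ (p - p^(n+1))*D^(n+1)
    have hSB : S - p * D = B := by simp [hS, hD]; ring
    have step3 : (p - p ^ (n + 1)) * D ^ (n + 1)
        ≤ S * ((p - p ^ n) * D ^ n) + p * (1 - p) * D * D ^ n := by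
      have key : S * ((p - p ^ n) * D ^ n) + p * (1 - p) * D * D ^ n
          - (p - p ^ (n + 1)) * D ^ (n + 1) = D ^ n * (p - p ^ n) * (S - p * D) := by
        rw [pow_succ]; ring
      have hpos : 0 ≤ D ^ n * (p - p ^ n) * (S - p * D) := by
        rw [hSB]
        exact mul_nonneg (mul_nonneg hDn (by linarith)) hB
      linarith
    calc S ^ (n + 1) + (p - p ^ (n + 1)) * D ^ (n + 1)
        ≤ S ^ (n + 1) + S * ((p - p ^ n) * D ^ n) + p * (1 - p) * D * D ^ n := by
          linarith
      _ = S * (S ^ n + (p - p ^ n) * D ^ n) + p * (1 - p) * D * D ^ n := by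
          rw [pow_succ]; ring
      _ ≤ S * (p * A ^ n + (1 - p) * B ^ n) + p * (1 - p) * D * (A ^ n - B ^ n) := by
          linarith
      _ = p * A ^ (n + 1) + (1 - p) * B ^ (n + 1) := hid.symm

theorem stmt_16 (n : ℕ) (hn : 2 ≤ n) (p r t : ℝ) (hp : 0 < p) (hp1 : p < 1)
    (hr : 0 < r) (ht : 0 < t) :
    p * (1 + ((1 - p) / p) * Real.exp (-(r * t)))^n
      + (1 - p) * (1 - Real.exp (-(r * t)))^n
    ≥ 1 + ((1 / p^(n - 1)) - 1) * Real.exp (-(n * r * t)) := by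
  obtain ⟨m, rfl⟩ : ∃ m, n = m + 2 := ⟨n - 2, by omega⟩
  set x := Real.exp (-(r * t)) with hx
  have hx0 : 0 < x := Real.exp_pos _
  have hx1 : x < 1 := by
    rw [hx]
    have : -(r * t) < 0 := by nlinarith
    exact Real.exp_lt_one_iff.mpr this
  set A := 1 + ((1 - p) / p) * x with hA
  set B := 1 - x with hB
  have hpne : p ≠ 0 := ne_of_gt hp
  have hB0 : 0 ≤ B := by simp [hB]; linarith
  have hAB : B ≤ A := by
    have h1 : (0:ℝ) < ((1 - p) / p) * x + x := by
      have : 0 < (1 - p) / p := div_pos (by linarith) hp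
      nlinarith
    simp only [hA, hB]; linarith
  have hkey := key_ineq p A B hp hp1 hB0 hAB (m + 2) (by omega)
  have hS1 : p * A + (1 - p) * B = 1 := by
    simp only [hA, hB]; field_simp; ring
  rw [hS1, one_pow] at hkey
  have hD : A - B = x / p := by
    simp only [hA, hB]; field_simp; ring
  rw [hD] at hkey
  have hexp : Real.exp (-((m + 2 : ℕ) * r * t)) = x ^ (m + 2) := by
    rw [hx, ← Real.exp_nat_mul]
    ring_nf
  have hrhs : (p - p ^ (m + 2)) * (x / p) ^ (m + 2)
      = ((1 / p ^ (m + 2 - 1)) - 1) * x ^ (m + 2) := by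
    have : m + 2 - 1 = m + 1 := by omega
    rw [this, div_pow]
    have hpp : p ^ (m + 2) ≠ 0 := pow_ne_zero _ hpne
    field_simp
    ring
  rw [hrhs] at hkey
  rw [hexp]
  linarith
end

section
/- For all integers n ≥ 2, p ∈ (0,1), and r,t > 0 with t finite: p(1 + ((1−p)/p)e^{−rt})^n + (1−p)(1−e^{−rt})^n > 1. -/
/-! The two values `1 + ((1 - p) / p) e^{-rt}` and `1 - e^{-rt}`, weighted by `p` and `1 - p`,
have mean `1` and are distinct, so the claim is strict Jensen for the convex map `x ↦ x ^ n`. -/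

lemma one_lt_weighted_pow_add_pow {n : ℕ} (hn : 2 ≤ n) {w x y : ℝ} (hw0 : 0 < w) (hw1 : w < 1)
    (hx : 0 ≤ x) (hy : 0 ≤ y) (hxy : x ≠ y) (hmean : w * x + (1 - w) * y = 1) :
    1 < w * x ^ n + (1 - w) * y ^ n := by
  have := (strictConvexOn_pow hn).2 (Set.mem_Ici.2 hx) (Set.mem_Ici.2 hy) hxy hw0
    (sub_pos.2 hw1) (add_sub_cancel w 1)
  simpa only [smul_eq_mul, hmean, one_pow] using this

theorem stmt_17 (n : ℕ) (hn : 2 ≤ n) (p r t : ℝ) (hp : 0 < p) (hp1 : p < 1)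
    (hr : 0 < r) (ht : 0 < t) :
    1 < p * (1 + ((1 - p) / p) * Real.exp (-(r * t)))^n
      + (1 - p) * (1 - Real.exp (-(r * t)))^n := by
  set q := Real.exp (-(r * t))
  have hq0 : 0 < q := Real.exp_pos _
  have hq1 : q < 1 := Real.exp_lt_one_iff.2 (neg_neg_of_pos (mul_pos hr ht))
  have hqp : 0 ≤ (1 - p) / p * q := by
    have := div_pos (sub_pos.2 hp1) hp
    positivity
  refine one_lt_weighted_pow_add_pow hn hp hp1 (by linarith) (by linarith) ?_ ?_
  · exact ne_of_gt (by linarith)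
  · field_simp
    ring
end

section
/- For each k ≥ 2 let p = 1/k and let M(k) be the maximum over t > 0 of ρ(t) = [1 + (k−1)e^{−2st}]/[1 + (k−1)e^{−2rt}] with r = 2s, s > 0 fixed. Then M(k) = (√k + 1)/2; in particular M(k)/√k → 1/2 as k → ∞. -/
/-!
Substituting `x = exp (-2 s t) ∈ (0, 1)` (so that `exp (-4 s t) = x ^ 2`) and writing `k = a ^ 2`,
the ratio becomes `(1 + (a² - 1) x) / (1 + (a² - 1) x²)`, and
`(a + 1) (1 + (a² - 1) x²) - 2 (1 + (a² - 1) x) = (a - 1) ((a + 1) x - 1)²`.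
So the ratio is at most `(a + 1) / 2`, with equality at `x = 1 / (a + 1)`, i.e. `t = log (a + 1) / (2 s)`.
-/

open Filter Real

lemma one_add_mul_div_one_add_mul_sq_le_sqrt_add_one_div_two {k : ℝ} (hk : 1 ≤ k) (x : ℝ) :
    (1 + (k - 1) * x) / (1 + (k - 1) * x ^ 2) ≤ (√k + 1) / 2 := by
  obtain ⟨a, ha, rfl⟩ : ∃ a, 1 ≤ a ∧ k = a ^ 2 :=
    ⟨√k, one_le_sqrt.2 hk, (sq_sqrt (by linarith)).symm⟩
  rw [sqrt_sq (by linarith), div_le_div_iff₀ (by nlinarith [sq_nonneg x]) two_pos]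
  nlinarith [mul_nonneg (sub_nonneg.2 ha) (sq_nonneg ((a + 1) * x - 1))]

lemma one_add_mul_div_one_add_mul_sq_inv_sqrt_add_one {k : ℝ} (hk : 0 < k) :
    (1 + (k - 1) * (√k + 1)⁻¹) / (1 + (k - 1) * ((√k + 1)⁻¹) ^ 2) = (√k + 1) / 2 := by
  obtain ⟨a, ha, rfl⟩ : ∃ a, 0 < a ∧ k = a ^ 2 := ⟨√k, sqrt_pos.2 hk, (sq_sqrt hk.le).symm⟩
  have hnum : 1 + (a ^ 2 - 1) * (a + 1)⁻¹ = a := by field_simp; ring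
  have hden : 1 + (a ^ 2 - 1) * ((a + 1)⁻¹) ^ 2 = 2 * a / (a + 1) := by field_simp; ring
  rw [sqrt_sq ha.le, hnum, hden]
  field_simp

lemma exp_neg_two_mul_two_mul (s t : ℝ) :
    exp (-(2 * (2 * s) * t)) = exp (-(2 * s * t)) ^ 2 := by
  rw [← exp_nat_mul]
  ring_nf

lemma exp_neg_two_mul_log_div {a s : ℝ} (ha : 0 < a) (hs : s ≠ 0) :
    exp (-(2 * s * (log a / (2 * s)))) = a⁻¹ := by
  rw [mul_div_cancel₀ _ (by positivity), exp_neg, exp_log ha]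

lemma tendsto_add_one_div_two_div_self {α : Type*} {l : Filter α} {g : α → ℝ}
    (hg : Tendsto g l atTop) : Tendsto (fun x => (g x + 1) / 2 / g x) l (nhds (1 / 2)) := by
  have hlim : Tendsto (fun x => 1 / 2 + (g x)⁻¹ / 2) l (nhds (1 / 2)) := by
    simpa using ((tendsto_inv_atTop_zero.comp hg).div_const 2).const_add (1 / 2 : ℝ)
  refine hlim.congr' ?_
  filter_upwards [hg.eventually_gt_atTop 0] with x hx
  field_simp

theorem stmt_19 (s : ℝ) (hs : 0 < s) :
    (∀ k : ℕ, 2 ≤ k →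
      IsGreatest ((fun t : ℝ => (1 + (k - 1 : ℝ) * Real.exp (-(2 * s * t))) /
          (1 + (k - 1 : ℝ) * Real.exp (-(2 * (2 * s) * t)))) '' Set.Ioi 0)
        ((Real.sqrt k + 1) / 2)) ∧
    Filter.Tendsto (fun k : ℕ => ((Real.sqrt k + 1) / 2) / Real.sqrt k)
      Filter.atTop (nhds (1 / 2)) := by
  refine ⟨fun k hk => ⟨?_, ?_⟩, ?_⟩
  · have hk_pos : (0 : ℝ) < k := by exact_mod_cast (by omega : 0 < k)
    have ha : 1 < √(k : ℝ) + 1 := by linarith [sqrt_pos.2 hk_pos]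
    refine ⟨log (√k + 1) / (2 * s), div_pos (log_pos ha) (by positivity), ?_⟩
    beta_reduce
    rw [exp_neg_two_mul_two_mul, exp_neg_two_mul_log_div (by linarith) hs.ne']
    exact one_add_mul_div_one_add_mul_sq_inv_sqrt_add_one hk_pos
  · rintro _ ⟨t, -, rfl⟩
    simp only [exp_neg_two_mul_two_mul]
    exact one_add_mul_div_one_add_mul_sq_le_sqrt_add_one_div_two
      (by exact_mod_cast (by omega : 1 ≤ k)) _
  · exact tendsto_add_one_div_two_div_self (tendsto_sqrt_atTop.comp tendsto_natCast_atTop_atTop)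
end
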